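/- Forced dup: In the abstract linear language λ̂_lin, if Γ ⊩ ae, the variable x occurs at most once in the multiset Γ, and the derivation of Γ ⊩ ae contains a subderivation Γₛ ⊩ aeₛ in which x occurs at least twice in Γₛ, then ae contains a subterm of the form dup Γ′ ae′ with x ∈ Γ′. -/

import Mathlib

/-!
Formalization of the abstract linear language λ̂_lin from "Type Classes for
Lightweight Substructural Types" (Clamp), §4.1.
-/

namespace LamLin

/-- Unannotated terms: variables, abstractions, multiplicative pairs `⊗`, and
additive choices `&`. -/
inductive ETm : Type
| var : String → ETm
| lam : String → ETm → ETm
| tens : ETm → ETm → ETm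
| amp : ETm → ETm → ETm
deriving DecidableEq

/-- Annotated terms: additionally `dup Γ ae` and `drop Γ ae`, where `Γ` is a
multiset of variables. -/
inductive ATm : Type
| var : String → ATm
| lam : String → ATm → ATm
| tens : ATm → ATm → ATm
| amp : ATm → ATm → ATm
| dup : Multiset String → ATm → ATm
| drop : Multiset String → ATm → ATm

/-- Free variables of an unannotated term. -/
def ETm.fv : ETm → Finset String
| .var x => {x}
| .lam x e => e.fv \ {x}
| .tens a b => a.fv ∪ b.fv
| .amp a b => a.fv ∪ b.fv

/-- Free variables of an annotated term; for `dup Γ ae` and `drop Γ ae` this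
includes the variables of `Γ` together with the free variables of `ae`. -/
def ATm.fv : ATm → Finset String
| .var x => {x}
| .lam x a => a.fv \ {x}
| .tens a b => a.fv ∪ b.fv
| .amp a b => a.fv ∪ b.fv
| .dup Γ a => Γ.toFinset ∪ a.fv
| .drop Γ a => Γ.toFinset ∪ a.fv

/-- Well-formedness `Γ ⊩ ae` of an annotated term in a multiset context. -/
inductive WF : Multiset String → ATm → Prop
| var : WF {x} (.var x)
| lam : x ∉ Γ → WF (Γ + {x}) a → WF Γ (.lam x a)
| tens : WF Γ₁ a → WF Γ₂ b → WF (Γ₁ + Γ₂) (.tens a b)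
| amp : WF Γ a → WF Γ b → WF Γ (.amp a b)
| dup : WF (Γ₁ + Γ₂ + Γ₂) a → WF (Γ₁ + Γ₂) (.dup Γ₂ a)
| drop : WF Γ₁ a → WF (Γ₁ + Γ₂) (.drop Γ₂ a)

/-- The dup/drop inference (elaboration) algorithm. -/
def infer : ETm → ATm
| .var x => .var x
| .lam x e =>
    if x ∈ e.fv then .lam x (infer e) else .lam x (.drop {x} (infer e))
| .tens a b => .dup (a.fv ∩ b.fv).val (.tens (infer a) (infer b))
| .amp a b =>
    .amp (.drop (b.fv \ a.fv).val (infer a)) (.drop (a.fv \ b.fv).val (infer b))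

/-- Erasure of dup/drop annotations. -/
def erase : ATm → ETm
| .var x => .var x
| .lam x a => .lam x (erase a)
| .tens a b => .tens (erase a) (erase b)
| .amp a b => .amp (erase a) (erase b)
| .dup _ a => erase a
| .drop _ a => erase a

/-- `Subterm s t`: `s` occurs as a subterm of the annotated term `t`. -/
inductive Subterm : ATm → ATm → Prop
| refl : Subterm a a
| lam : Subterm s a → Subterm s (.lam x a)
| tensL : Subterm s a → Subterm s (.tens a b)
| tensR : Subterm s b → Subterm s (.tens a b)
| ampL : Subterm s a → Subterm s (.amp a b)
| ampR : Subterm s b → Subterm s (.amp a b)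
| dup : Subterm s a → Subterm s (.dup Γ a)
| drop : Subterm s a → Subterm s (.drop Γ a)

/-- `WFSub Γ ae Γₛ aeₛ`: there is a derivation of `Γ ⊩ ae` containing the
judgment `Γₛ ⊩ aeₛ` as a subderivation. -/
inductive WFSub : Multiset String → ATm → Multiset String → ATm → Prop
| refl : WF Γ a → WFSub Γ a Γ a
| lam : x ∉ Γ → WFSub (Γ + {x}) a Γs as → WFSub Γ (.lam x a) Γs as
| tensL : WFSub Γ₁ a Γs as → WF Γ₂ b → WFSub (Γ₁ + Γ₂) (.tens a b) Γs as
| tensR : WF Γ₁ a → WFSub Γ₂ b Γs as → WFSub (Γ₁ + Γ₂) (.tens a b) Γs as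
| ampL : WFSub Γ a Γs as → WF Γ b → WFSub Γ (.amp a b) Γs as
| ampR : WF Γ a → WFSub Γ b Γs as → WFSub Γ (.amp a b) Γs as
| dup : WFSub (Γ₁ + Γ₂ + Γ₂) a Γs as → WFSub (Γ₁ + Γ₂) (.dup Γ₂ a) Γs as
| drop : WFSub Γ₁ a Γs as → WFSub (Γ₁ + Γ₂) (.drop Γ₂ a) Γs as

end LamLin


/-!
Along a branch of a derivation the multiplicity of `x` in the context can only grow at a `dup`
rule whose annotation contains `x`; the `λ` rule may bind `x`, but only when it was absent,
which raises its multiplicity to `1` at most. So without such a `dup`, every context in the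
derivation holds `x` at most `max (Γ.count x) 1` times.
-/

namespace LamLin

lemma count_add_singleton_le_max {Γ : Multiset String} {y : String} (hy : y ∉ Γ) (x : String) :
    (Γ + {y}).count x ≤ max (Γ.count x) 1 := by
  rw [Multiset.count_add, Multiset.count_singleton]
  by_cases hxy : x = y
  · subst hxy
    simp [Multiset.count_eq_zero.mpr hy]
  · simp [hxy]

theorem WFSub.count_le_max_of_forall_dup_not_mem {Γ Γs : Multiset String} {ae aes : ATm} {x : String}
    (h : WFSub Γ ae Γs aes) (hdup : ∀ Γ' ae', Subterm (.dup Γ' ae') ae → x ∉ Γ') :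
    Γs.count x ≤ max (Γ.count x) 1 := by
  induction h with
  | refl _ => exact le_max_left _ _
  | lam hy _ ih =>
    exact (ih fun Γ' ae' hs => hdup Γ' ae' hs.lam).trans
      (max_le (count_add_singleton_le_max hy x) (le_max_right _ _))
  | tensL _ _ ih =>
    refine (ih fun Γ' ae' hs => hdup Γ' ae' hs.tensL).trans (max_le_max_right 1 ?_)
    simp [Multiset.count_add]
  | tensR _ _ ih =>
    refine (ih fun Γ' ae' hs => hdup Γ' ae' hs.tensR).trans (max_le_max_right 1 ?_)
    simp [Multiset.count_add]
  | ampL _ _ ih => exact ih fun Γ' ae' hs => hdup Γ' ae' hs.ampL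
  | ampR _ _ ih => exact ih fun Γ' ae' hs => hdup Γ' ae' hs.ampR
  | dup _ ih =>
    have hx : x ∉ _ := hdup _ _ Subterm.refl
    refine (ih fun Γ' ae' hs => hdup Γ' ae' hs.dup).trans (max_le_max_right 1 ?_)
    simp [Multiset.count_add, Multiset.count_eq_zero.mpr hx]
  | drop _ ih =>
    refine (ih fun Γ' ae' hs => hdup Γ' ae' hs.drop).trans (max_le_max_right 1 ?_)
    simp [Multiset.count_add]

/-- **Forced dup** (Lemma 10 of the Clamp paper).
If `Γ ⊩ ae`, `Γ(x) ≤ 1`, and the derivation of `Γ ⊩ ae` contains a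
subderivation `Γₛ ⊩ aeₛ` with `Γₛ(x) ≥ 2`, then `ae` contains a subterm
`dup Γ′ ae′` with `x ∈ Γ′`. -/
theorem forced_dup {Γ Γs : Multiset String} {ae aes : ATm} {x : String}
    (h : WFSub Γ ae Γs aes) (hx : Γ.count x ≤ 1) (hs : 2 ≤ Γs.count x) :
    ∃ (Γ' : Multiset String) (ae' : ATm),
      Subterm (.dup Γ' ae') ae ∧ x ∈ Γ' := by
  by_contra! hdup
  have := h.count_le_max_of_forall_dup_not_mem hdup
  omega

end LamLin
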